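/- Let (K_1,…,K_n) be a Cantor-type graph-directed attractor in ℝ^d. Let P be a face of [0,1]^d of dimension at most d−1. For each i ∈ {1,…,n}, P ∩ K_i ≠ ∅ if and only if for every k ≥ 1 there is a walk of length k in the graph G_P which starts from i. -/
import Mathlib


open Set

/-- The closed unit cube `[0,1]^d` in `ℝ^d`. -/
def unitCube (d : ℕ) : Set (Fin d → ℝ) := {x | ∀ m, x m ∈ Set.Icc (0 : ℝ) 1}

/-- The contracting similarity `x ↦ N⁻¹(x + t)` on `ℝ^d`. -/
noncomputable def cmap {d : ℕ} (N : ℕ) (t : Fin d → ℕ) (x : Fin d → ℝ) : Fin d → ℝ :=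
  fun m => (x m + t m) / N

/-- The face of `[0,1]^d` determined by an index set `s` and prescribed values `a`
(`a m ∈ {0,1}` for `m ∈ s`); its dimension is `d - s.card`. -/
def face {d : ℕ} (s : Finset (Fin d)) (a : Fin d → ℝ) : Set (Fin d → ℝ) :=
  {x | x ∈ unitCube d ∧ ∀ m ∈ s, x m = a m}

/-- A Cantor-type graph-directed system: a finite directed multigraph on `Fin n`
in which every vertex has an outgoing edge, together with translation vectors
`t e ∈ {0,…,N-1}^d`; distinct parallel edges carry distinct vectors. -/
structure CantorGDS (d N n : ℕ) where
  E : Type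
  fintypeE : Fintype E
  src : E → Fin n
  dst : E → Fin n
  t : E → Fin d → ℕ
  t_lt : ∀ e m, t e m < N
  exists_out : ∀ v : Fin n, ∃ e : E, src e = v
  distinct : ∀ e e' : E, src e = src e' → dst e = dst e' → t e = t e' → e = e'

namespace CantorGDS

/-- The map `φ_e(x) = N⁻¹(x + t_e)` associated with an edge. -/
noncomputable def phi {d N n : ℕ} (S : CantorGDS d N n) (e : S.E) : (Fin d → ℝ) → (Fin d → ℝ) :=
  cmap N (S.t e)

/-- `(K 1, …, K n)` is the Cantor-type graph-directed attractor of `S`: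
an `n`-tuple of nonempty compact sets with `K i = ⋃_{j} ⋃_{e ∈ E_{i,j}} φ_e(K j)`. -/
def IsAttractor {d N n : ℕ} (S : CantorGDS d N n) (K : Fin n → Set (Fin d → ℝ)) : Prop :=
  (∀ i, (K i).Nonempty) ∧ (∀ i, IsCompact (K i)) ∧
    (∀ i, K i = ⋃ e : S.E, ⋃ _ : S.src e = i, S.phi e '' K (S.dst e))

/-- The level-`k` approximations: `Q 0 i = [0,1]^d` and
`Q (k+1) i = ⋃_{j} ⋃_{e ∈ E_{i,j}} φ_e(Q k j)`. -/
def Q {d N n : ℕ} (S : CantorGDS d N n) : ℕ → Fin n → Set (Fin d → ℝ)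
  | 0, _ => unitCube d
  | (k+1), i => ⋃ e : S.E, ⋃ _ : S.src e = i, S.phi e '' CantorGDS.Q S k (S.dst e)

/-- A solid edge from `(i,j)` to `(i',j')` in the intersecting graph:
`i ≠ j` and there are `e ∈ E_{i,i'}`, `e' ∈ E_{j,j'}` with `φ_e = φ_{e'}`. -/
def SolidEdge {d N n : ℕ} (S : CantorGDS d N n) (i j i' j' : Fin n) : Prop :=
  i ≠ j ∧ ∃ e e' : S.E, S.src e = i ∧ S.dst e = i' ∧ S.src e' = j ∧ S.dst e' = j' ∧
    S.t e = S.t e'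

/-- `e, e'` witness a dashed edge: the cubes `φ_e([0,1]^d)` and `φ_{e'}([0,1]^d)` share a
nonempty common face of dimension at most `d-1`; equivalently `t_e ≠ t_{e'}` and every
coordinate of `t_e - t_{e'}` lies in `{-1,0,1}`. -/
def DashedWitness {d N n : ℕ} (S : CantorGDS d N n) (e e' : S.E) : Prop :=
  S.t e ≠ S.t e' ∧ ∀ m, ((S.t e m : ℤ) - (S.t e' m : ℤ)).natAbs ≤ 1

/-- A terminated edge from `(i,j)` to `(i',j')` in the intersecting graph: either a solid
edge with `i' = j'`, or a dashed edge witnessed by `e, e'` with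
`φ_e(K i') ∩ φ_{e'}(K j') ≠ ∅`. -/
def TerminatedEdge {d N n : ℕ} (S : CantorGDS d N n) (K : Fin n → Set (Fin d → ℝ))
    (i j i' j' : Fin n) : Prop :=
  i ≠ j ∧ ∃ e e' : S.E, S.src e = i ∧ S.dst e = i' ∧ S.src e' = j ∧ S.dst e' = j' ∧
    ((S.t e = S.t e' ∧ i' = j') ∨
      (DashedWitness S e e' ∧ (S.phi e '' K i' ∩ S.phi e' '' K j').Nonempty))

/-- A solid walk of length `m` in the intersecting graph starting from `(i,j)`. -/
def SolidWalkOfLength {d N n : ℕ} (S : CantorGDS d N n) (m : ℕ) (i j : Fin n) : Prop :=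
  ∃ p q : ℕ → Fin n, p 0 = i ∧ q 0 = j ∧
    ∀ k < m, SolidEdge S (p k) (q k) (p (k + 1)) (q (k + 1))

/-- An infinite solid walk in the intersecting graph starting from `(i,j)`. -/
def InfSolidWalk {d N n : ℕ} (S : CantorGDS d N n) (i j : Fin n) : Prop :=
  ∃ p q : ℕ → Fin n, p 0 = i ∧ q 0 = j ∧
    ∀ k, SolidEdge S (p k) (q k) (p (k + 1)) (q (k + 1))

/-- A terminated finite walk in the intersecting graph starting from `(i,j)`: a walk of
length `m + 1` whose first `m` edges are solid and whose last edge is terminated. -/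
def TerminatedWalk {d N n : ℕ} (S : CantorGDS d N n) (K : Fin n → Set (Fin d → ℝ))
    (i j : Fin n) : Prop :=
  ∃ m : ℕ, ∃ p q : ℕ → Fin n, p 0 = i ∧ q 0 = j ∧
    (∀ k < m, SolidEdge S (p k) (q k) (p (k + 1)) (q (k + 1))) ∧
    TerminatedEdge S K (p m) (q m) (p (m + 1)) (q (m + 1))

/-- The edge relation of the graph `G_P`: there is an edge from `i` to `j` whenever
`P ∩ ⋃_{e ∈ E_{i,j}} φ_e([0,1]^d) ≠ ∅`. -/
def GPEdge {d N n : ℕ} (S : CantorGDS d N n) (P : Set (Fin d → ℝ)) (i j : Fin n) : Prop :=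
  ∃ e : S.E, S.src e = i ∧ S.dst e = j ∧ (P ∩ S.phi e '' unitCube d).Nonempty

/-- There is a walk of length `k` in the graph `G_P` starting from `i`. -/
def GPWalk {d N n : ℕ} (S : CantorGDS d N n) (P : Set (Fin d → ℝ)) (i : Fin n) (k : ℕ) :
    Prop :=
  ∃ p : ℕ → Fin n, p 0 = i ∧ ∀ l < k, GPEdge S P (p l) (p (l + 1))

/-- `l` is a walk in the directed graph of `S` starting from vertex `i`. -/
def WalkFrom {d N n : ℕ} (S : CantorGDS d N n) (i : Fin n) (l : List S.E) : Prop :=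
  (∀ e ∈ l.head?, S.src e = i) ∧ List.Chain' (fun e e' => S.dst e = S.src e') l

/-- The terminal vertex of a walk `l` starting from `i` (equal to `i` if `l` is empty). -/
def ter {d N n : ℕ} (S : CantorGDS d N n) (i : Fin n) (l : List S.E) : Fin n :=
  l.getLast?.elim i S.dst

/-- For a walk `𝐞 = (e_1, …, e_k)`, the composition `φ_𝐞 = φ_{e_1} ∘ ⋯ ∘ φ_{e_k}`. -/
noncomputable def phiWalk {d N n : ℕ} (S : CantorGDS d N n) (l : List S.E) :
    (Fin d → ℝ) → (Fin d → ℝ) :=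
  l.foldr (fun e f => S.phi e ∘ f) id

/-- For an infinite walk `e`, the composition `φ_{e 0} ∘ ⋯ ∘ φ_{e (m-1)}` of its first
`m` maps. -/
noncomputable def compWalk {d N n : ℕ} (S : CantorGDS d N n) (e : ℕ → S.E) :
    ℕ → (Fin d → ℝ) → (Fin d → ℝ)
  | 0 => id
  | (m + 1) => CantorGDS.compWalk S e m ∘ S.phi (e m)

end CantorGDS

/-- The constant `c(n,d) = (d-1)n² + (n²+n)/2 + d - 1`. -/
def cConst (n d : ℕ) : ℕ := (d - 1) * n ^ 2 + (n ^ 2 + n) / 2 + d - 1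
section Aux

variable {d N n : ℕ}

lemma unitCube_isClosed (d : ℕ) : IsClosed (unitCube d) := by
  have h : unitCube d = ⋂ m, (fun x : Fin d → ℝ => x m) ⁻¹' Set.Icc 0 1 := by
    ext x; simp [unitCube]
  rw [h]
  exact isClosed_iInter fun m => isClosed_Icc.preimage (continuous_apply m)

lemma face_isClosed (s : Finset (Fin d)) (a : Fin d → ℝ) : IsClosed (face s a) := by
  have h : face s a = unitCube d ∩ ⋂ m ∈ s, {x : Fin d → ℝ | x m = a m} := by
    ext x; simp [face, Set.mem_iInter]
  rw [h]
  exact (unitCube_isClosed d).inter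
    (isClosed_biInter fun m _ => isClosed_eq (continuous_apply m) continuous_const)

lemma face_nonempty (s : Finset (Fin d)) (a : Fin d → ℝ)
    (ha : ∀ m ∈ s, a m = 0 ∨ a m = 1) : (face s a).Nonempty := by
  refine ⟨fun m => if m ∈ s then a m else 0, ?_, ?_⟩
  · intro m
    by_cases hm : m ∈ s
    · rcases ha m hm with h | h <;> simp [hm, h]
    · simp [hm]
  · intro m hm; simp [hm]

lemma face_subset_cube (s : Finset (Fin d)) (a : Fin d → ℝ) :
    face s a ⊆ unitCube d := fun _ hx => hx.1

lemma t_le (S : CantorGDS d N n) (e : S.E) (m : Fin d) :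
    (S.t e m : ℝ) ≤ (N : ℝ) - 1 := by
  have := S.t_lt e m
  have : (S.t e m : ℝ) < (N : ℝ) := by exact_mod_cast this
  have h2 : (S.t e m : ℝ) + 1 ≤ (N : ℝ) := by
    exact_mod_cast Nat.succ_le_of_lt (S.t_lt e m)
  linarith

lemma phi_mem_cube (hN : 2 ≤ N) (S : CantorGDS d N n) (e : S.E)
    {x : Fin d → ℝ} (hx : x ∈ unitCube d) : S.phi e x ∈ unitCube d := by
  intro m
  have hxm := hx m
  have ht : (S.t e m : ℝ) ≤ (N : ℝ) - 1 := t_le S e m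
  have ht0 : (0 : ℝ) ≤ (S.t e m : ℝ) := by positivity
  have hNpos : (0 : ℝ) < N := by positivity
  simp only [CantorGDS.phi, cmap]
  constructor
  · apply div_nonneg _ hNpos.le
    linarith [hxm.1]
  · rw [div_le_one hNpos]
    linarith [hxm.2]

/-- The key face lemma. -/
lemma phi_mem_face_iff (hN : 2 ≤ N) (S : CantorGDS d N n)
    (s : Finset (Fin d)) (a : Fin d → ℝ) (ha : ∀ m ∈ s, a m = 0 ∨ a m = 1)
    (e : S.E) {x : Fin d → ℝ} (hx : x ∈ unitCube d) :
    S.phi e x ∈ face s a ↔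
      (x ∈ face s a ∧ ∀ m ∈ s, (S.t e m : ℝ) = a m * ((N : ℝ) - 1)) := by
  have hNpos : (0 : ℝ) < N := by positivity
  constructor
  · rintro ⟨-, hfix⟩
    have key : ∀ m ∈ s, x m = a m ∧ (S.t e m : ℝ) = a m * ((N : ℝ) - 1) := by
      intro m hm
      have h := hfix m hm
      simp only [CantorGDS.phi, cmap] at h
      have h' : x m + (S.t e m : ℝ) = (N : ℝ) * a m := by
        field_simp at h; linarith
      have hxm := hx m
      have ht : (S.t e m : ℝ) ≤ (N : ℝ) - 1 := t_le S e m
      have ht0 : (0 : ℝ) ≤ (S.t e m : ℝ) := by positivity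
      rcases ha m hm with h0 | h1
      · rw [h0] at h' ⊢
        have hx1 : 0 ≤ x m := hxm.1
        constructor
        · linarith
        · rw [zero_mul]; linarith
      · rw [h1] at h' ⊢
        have hx2 : x m ≤ 1 := hxm.2
        constructor
        · linarith
        · rw [one_mul]; linarith
    exact ⟨⟨hx, fun m hm => (key m hm).1⟩, fun m hm => (key m hm).2⟩
  · rintro ⟨⟨-, hxface⟩, hgood⟩
    refine ⟨phi_mem_cube hN S e hx, ?_⟩
    intro m hm
    simp only [CantorGDS.phi, cmap]
    rw [hxface m hm, hgood m hm]
    field_simp; ring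

lemma phi_image_subset (S : CantorGDS d N n) (K : Fin n → Set (Fin d → ℝ))
    (hK : S.IsAttractor K) (e : S.E) :
    S.phi e '' K (S.dst e) ⊆ K (S.src e) := by
  rw [hK.2.2 (S.src e)]
  exact Set.subset_iUnion_of_subset e
    (Set.subset_iUnion (fun _ : S.src e = S.src e => S.phi e '' K (S.dst e)) rfl)

lemma K_subset_cube (hd : 1 ≤ d) (hN : 2 ≤ N) (hn : 1 ≤ n)
    (S : CantorGDS d N n) (K : Fin n → Set (Fin d → ℝ)) (hK : S.IsAttractor K) :
    ∀ i, K i ⊆ unitCube d := by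
  obtain ⟨hne, hcp, heq⟩ := hK
  set L : Set ℝ := ⋃ (i : Fin n) (m : Fin d), (fun x : Fin d → ℝ => x m) '' K i with hL
  have hLc : IsCompact L :=
    isCompact_iUnion fun i => isCompact_iUnion fun m => (hcp i).image (continuous_apply m)
  have hLne : L.Nonempty := by
    obtain ⟨x, hx⟩ := hne ⟨0, hn⟩
    exact ⟨x ⟨0, hd⟩, Set.mem_iUnion.2 ⟨⟨0, hn⟩, Set.mem_iUnion.2 ⟨⟨0, hd⟩, ⟨x, hx, rfl⟩⟩⟩⟩
  have hmemL : ∀ i, ∀ x ∈ K i, ∀ m, x m ∈ L := fun i x hx m =>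
    Set.mem_iUnion.2 ⟨i, Set.mem_iUnion.2 ⟨m, ⟨x, hx, rfl⟩⟩⟩
  obtain ⟨b, hbL, hbub⟩ := hLc.exists_isGreatest hLne
  obtain ⟨c, hcL, hclb⟩ := hLc.exists_isLeast hLne
  have hNpos : (0 : ℝ) < N := by positivity
  have hN1 : (2 : ℝ) ≤ N := by exact_mod_cast hN
  have hb1 : b ≤ 1 := by
    simp only [hL, Set.mem_iUnion] at hbL
    obtain ⟨i₀, m₀, x₀, hx₀, hx₀m⟩ := hbL
    rw [heq i₀] at hx₀
    simp only [Set.mem_iUnion] at hx₀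
    obtain ⟨e, -, y, hy, hphiy⟩ := hx₀
    have h1 : (y m₀ + S.t e m₀) / N = b := by rw [← hx₀m, ← hphiy]; rfl
    have h1' : y m₀ + (S.t e m₀ : ℝ) = (N : ℝ) * b := by
      field_simp at h1; linarith
    have h2 : y m₀ ≤ b := hbub (hmemL _ y hy m₀)
    have h3 : (S.t e m₀ : ℝ) ≤ (N : ℝ) - 1 := t_le S e m₀
    nlinarith [h1', h2, h3, hN1]
  have hc0 : 0 ≤ c := by
    simp only [hL, Set.mem_iUnion] at hcL
    obtain ⟨i₀, m₀, x₀, hx₀, hx₀m⟩ := hcL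
    rw [heq i₀] at hx₀
    simp only [Set.mem_iUnion] at hx₀
    obtain ⟨e, -, y, hy, hphiy⟩ := hx₀
    have h1 : (y m₀ + S.t e m₀) / N = c := by rw [← hx₀m, ← hphiy]; rfl
    have h1' : y m₀ + (S.t e m₀ : ℝ) = (N : ℝ) * c := by
      field_simp at h1; linarith
    have h2 : c ≤ y m₀ := hclb (hmemL _ y hy m₀)
    have h3 : (0 : ℝ) ≤ (S.t e m₀ : ℝ) := by positivity
    nlinarith [h1', h2, h3, hN1]
  intro i x hx m
  exact ⟨le_trans hc0 (hclb (hmemL i x hx m)), le_trans (hbub (hmemL i x hx m)) hb1⟩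

end Aux
section Main

variable {d N n : ℕ}

lemma forward_step (hd : 1 ≤ d) (hN : 2 ≤ N) (hn : 1 ≤ n)
    (S : CantorGDS d N n) (K : Fin n → Set (Fin d → ℝ)) (hK : S.IsAttractor K)
    (s : Finset (Fin d)) (a : Fin d → ℝ) (ha : ∀ m ∈ s, a m = 0 ∨ a m = 1)
    (i : Fin n) (h : (face s a ∩ K i).Nonempty) :
    ∃ j, CantorGDS.GPEdge S (face s a) i j ∧ (face s a ∩ K j).Nonempty := by
  obtain ⟨x, hxP, hxK⟩ := h
  rw [hK.2.2 i] at hxK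
  simp only [Set.mem_iUnion] at hxK
  obtain ⟨e, hsrc, y, hyK, rfl⟩ := hxK
  have hycube : y ∈ unitCube d := K_subset_cube hd hN hn S K hK _ hyK
  obtain ⟨hyP, hgood⟩ := (phi_mem_face_iff hN S s a ha e hycube).1 hxP
  exact ⟨S.dst e, ⟨e, hsrc, rfl, ⟨S.phi e y, hxP, ⟨y, hycube, rfl⟩⟩⟩, ⟨y, hyP, hyK⟩⟩

lemma forward (hd : 1 ≤ d) (hN : 2 ≤ N) (hn : 1 ≤ n)
    (S : CantorGDS d N n) (K : Fin n → Set (Fin d → ℝ)) (hK : S.IsAttractor K)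
    (s : Finset (Fin d)) (a : Fin d → ℝ) (ha : ∀ m ∈ s, a m = 0 ∨ a m = 1)
    (i : Fin n) (h : (face s a ∩ K i).Nonempty) (k : ℕ) :
    CantorGDS.GPWalk S (face s a) i k := by
  suffices H : ∃ p : ℕ → Fin n, p 0 = i ∧
      (∀ l < k, CantorGDS.GPEdge S (face s a) (p l) (p (l + 1))) ∧
      (face s a ∩ K (p k)).Nonempty from ⟨H.choose, H.choose_spec.1, H.choose_spec.2.1⟩
  induction k with
  | zero => exact ⟨fun _ => i, rfl, fun l hl => absurd hl (Nat.not_lt_zero l), by simpa using h⟩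
  | succ k ih =>
    obtain ⟨p, h0, hedges, hne⟩ := ih
    obtain ⟨j, hedge, hne'⟩ := forward_step hd hN hn S K hK s a ha (p k) hne
    refine ⟨fun l => if l ≤ k then p l else j, by simp [h0], ?_, by simp [hne']⟩
    intro l hl
    rcases lt_or_eq_of_le (Nat.lt_succ_iff.1 hl) with hlk | hlk
    · have h1 : l ≤ k := hlk.le
      have h2 : l + 1 ≤ k := hlk
      simpa [h1, h2] using hedges l hlk
    · subst hlk
      simpa using hedge

lemma backward_approx (hd : 1 ≤ d) (hN : 2 ≤ N) (hn : 1 ≤ n)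
    (S : CantorGDS d N n) (K : Fin n → Set (Fin d → ℝ)) (hK : S.IsAttractor K)
    (s : Finset (Fin d)) (a : Fin d → ℝ) (ha : ∀ m ∈ s, a m = 0 ∨ a m = 1) :
    ∀ k : ℕ, ∀ i : Fin n, CantorGDS.GPWalk S (face s a) i k →
      ∃ x ∈ K i, ∃ z ∈ face s a, ∀ m, |x m - z m| ≤ 1 / (N : ℝ) ^ k := by
  have hNpos : (0 : ℝ) < N := by positivity
  intro k
  induction k with
  | zero =>
    intro i _
    obtain ⟨x, hx⟩ := hK.1 i
    obtain ⟨z, hz⟩ := face_nonempty s a ha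
    refine ⟨x, hx, z, hz, fun m => ?_⟩
    have h1 := K_subset_cube hd hN hn S K hK i hx m
    have h2 := hz.1 m
    simp only [pow_zero]
    rw [abs_le]
    constructor <;> [linarith [h1.1, h2.2]; linarith [h1.2, h2.1]]
  | succ k ih =>
    intro i hw
    obtain ⟨p, h0, hedges⟩ := hw
    obtain ⟨e, hsrc, hdst, w, hwP, z0, hz0cube, hwz⟩ := hedges 0 (Nat.succ_pos k)
    have hgood := ((phi_mem_face_iff hN S s a ha e hz0cube).1 (hwz ▸ hwP)).2
    have htail : CantorGDS.GPWalk S (face s a) (p 1) k :=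
      ⟨fun l => p (l + 1), rfl, fun l hl => hedges (l + 1) (by omega)⟩
    obtain ⟨x', hx'K, z', hz'P, hb⟩ := ih (p 1) htail
    have hx'K' : x' ∈ K (S.dst e) := by rw [hdst]; exact hx'K
    refine ⟨S.phi e x', ?_, S.phi e z', ?_, ?_⟩
    · have := phi_image_subset S K hK e ⟨x', hx'K', rfl⟩
      rwa [hsrc, h0] at this
    · exact (phi_mem_face_iff hN S s a ha e (face_subset_cube s a hz'P)).2 ⟨hz'P, hgood⟩
    · intro m
      have hdiff : S.phi e x' m - S.phi e z' m = (x' m - z' m) / N := by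
        simp only [CantorGDS.phi, cmap]; ring
      rw [hdiff, abs_div, abs_of_pos hNpos, pow_succ, ← div_div]
      gcongr
      exact hb m

end Main
/-- **Corollary.** Let `P` be a face of `[0,1]^d` of dimension at most `d-1`. For each
vertex `i`, `P ∩ K i ≠ ∅` iff for every `k ≥ 1` there is a walk of length `k` in the
graph `G_P` starting from `i`. -/
theorem face_inter_attractor_iff_gpWalks
    {d N n : ℕ} (hd : 1 ≤ d) (hN : 2 ≤ N) (hn : 1 ≤ n)
    (S : CantorGDS d N n) (K : Fin n → Set (Fin d → ℝ)) (hK : S.IsAttractor K)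
    (s : Finset (Fin d)) (a : Fin d → ℝ) (ha : ∀ m ∈ s, a m = 0 ∨ a m = 1)
    (hs : s.Nonempty) (i : Fin n) :
    (face s a ∩ K i).Nonempty ↔ ∀ k : ℕ, 1 ≤ k → CantorGDS.GPWalk S (face s a) i k := by
  constructor
  · intro h k _
    exact forward hd hN hn S K hK s a ha i h k
  · intro h
    have hNpos : (0 : ℝ) < N := by positivity
    have hPne : (face s a).Nonempty := face_nonempty s a ha
    have hPclosed : IsClosed (face s a) := face_isClosed s a
    obtain ⟨x₀, hx₀K, hmin⟩ := (hK.2.1 i).exists_isMinOn (hK.1 i)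
      (Metric.continuous_infDist_pt (face s a)).continuousOn
    have hbound : ∀ k : ℕ, 1 ≤ k → Metric.infDist x₀ (face s a) ≤ 1 / (N : ℝ) ^ k := by
      intro k hk
      obtain ⟨x, hxK, z, hzP, hb⟩ := backward_approx hd hN hn S K hK s a ha k i (h k hk)
      have h1 : Metric.infDist x₀ (face s a) ≤ Metric.infDist x (face s a) := hmin hxK
      have h2 : Metric.infDist x (face s a) ≤ dist x z := Metric.infDist_le_dist_of_mem hzP
      have h3 : dist x z ≤ 1 / (N : ℝ) ^ k := by
        apply dist_pi_le_iff (by positivity) |>.2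
        intro m
        rw [Real.dist_eq]
        exact hb m
      linarith
    have hzero : Metric.infDist x₀ (face s a) ≤ 0 := by
      have hten : Filter.Tendsto (fun k : ℕ => 1 / (N : ℝ) ^ k) Filter.atTop (nhds 0) := by
        have h1 : |(1 : ℝ) / N| < 1 := by
          rw [abs_of_pos (by positivity)]
          rw [div_lt_one hNpos]
          exact_mod_cast Nat.lt_of_lt_of_le Nat.one_lt_two hN
        simpa [one_div, inv_pow] using tendsto_pow_atTop_nhds_zero_of_abs_lt_one h1
      refine ge_of_tendsto hten ?_
      filter_upwards [Filter.eventually_ge_atTop 1] with k hk using hbound k hk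
    have heq0 : Metric.infDist x₀ (face s a) = 0 :=
      le_antisymm hzero Metric.infDist_nonneg
    have hx₀P : x₀ ∈ face s a := by
      rwa [← hPclosed.mem_iff_infDist_zero hPne] at heq0
    exact ⟨x₀, hx₀P, hx₀K⟩
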